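/- Let A and B be bounded linear operators on H and t ∈ [0,1]. For the block-diagonal operator T = (A 0; 0 B) on H ⊕ H, one has ‖T‖_{t-ber} ≤ max{ ‖A‖_{t-ber}, ‖B‖_{t-ber} }, where the t-Berezin norm of T is taken with respect to the family of unit vectors of H ⊕ H of the form (c₁ k_{λ₁}, c₂ k_{λ₂}) with λ₁, λ₂ ∈ Ω and c₁, c₂ ∈ ℂ satisfying |c₁|² + |c₂|² = 1. -/
import Mathlib


open ContinuousLinearMap
open scoped InnerProductSpace

/-- The `t`-Berezin norm of `A` with respect to the family `k` of (normalized reproducing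
kernel) vectors. -/
noncomputable def tber {E : Type*} [NormedAddCommGroup E] [InnerProductSpace ℂ E]
    [CompleteSpace E] {ι : Type*} (k : ι → E) (t : ℝ) (A : E →L[ℂ] E) : ℝ :=
  ⨆ p : ι × ι, (t * ‖⟪A (k p.1), k p.2⟫_ℂ‖ + (1 - t) * ‖⟪adjoint A (k p.1), k p.2⟫_ℂ‖)

/-- The Berezin norm of `A` with respect to the family `k`. -/
noncomputable def berNorm {E : Type*} [NormedAddCommGroup E] [InnerProductSpace ℂ E]
    {ι : Type*} (k : ι → E) (A : E →L[ℂ] E) : ℝ :=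
  ⨆ p : ι × ι, ‖⟪A (k p.1), k p.2⟫_ℂ‖

/-- The Berezin number of `A` with respect to the family `k`. -/
noncomputable def berNum {E : Type*} [NormedAddCommGroup E] [InnerProductSpace ℂ E]
    {ι : Type*} (k : ι → E) (A : E →L[ℂ] E) : ℝ :=
  ⨆ l : ι, ‖⟪A (k l), k l⟫_ℂ‖

/-- The modulus `|A| = (A*A)^(1/2)` of an operator, via the continuous functional calculus. -/
noncomputable def absOp {H : Type*} [NormedAddCommGroup H] [InnerProductSpace ℂ H]
    [CompleteSpace H] (A : H →L[ℂ] H) : H →L[ℂ] H :=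
  cfc Real.sqrt (adjoint A * A)

/-- Real powers of a (positive) operator via the continuous functional calculus. -/
noncomputable def rpowOp {H : Type*} [NormedAddCommGroup H] [InnerProductSpace ℂ H]
    [CompleteSpace H] (A : H →L[ℂ] H) (r : ℝ) : H →L[ℂ] H :=
  cfc (fun x : ℝ => x ^ r) A

/-- The family of unit vectors `(c₁ k_{λ₁}, c₂ k_{λ₂})` of `H ⊕ H` (realized as `WithLp 2 (H × H)`)
indexed by pairs of kernel indices and pairs of scalars with `|c₁|² + |c₂|² = 1`. -/
noncomputable def K2 {H : Type*} [NormedAddCommGroup H] [InnerProductSpace ℂ H]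
    {Ω : Type*} (k : Ω → H) :
    {q : (Ω × Ω) × ℂ × ℂ // ‖q.2.1‖ ^ 2 + ‖q.2.2‖ ^ 2 = 1} → WithLp 2 (H × H) :=
  fun q => (WithLp.equiv 2 (H × H)).symm (q.1.2.1 • k q.1.1.1, q.1.2.2 • k q.1.1.2)

theorem stmt7 {H : Type*} [NormedAddCommGroup H] [InnerProductSpace ℂ H] [CompleteSpace H]
    {Ω : Type*} [Nonempty Ω] (k : Ω → H) (hk : ∀ l, ‖k l‖ = 1)
    (t : ℝ) (ht : t ∈ Set.Icc (0 : ℝ) 1) (A B : H →L[ℂ] H)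
    (T : WithLp 2 (H × H) →L[ℂ] WithLp 2 (H × H))
    (hT : ∀ x y : H, T ((WithLp.equiv 2 (H × H)).symm (x, y)) =
      (WithLp.equiv 2 (H × H)).symm (A x, B y)) :
    tber (K2 k) t T ≤ max (tber k t A) (tber k t B) := by
  obtain ⟨ht0, ht1⟩ := ht
  obtain ⟨l0⟩ := ‹Nonempty Ω›
  have hinner : ∀ (x1 x2 y1 y2 : H),
      ⟪(WithLp.equiv 2 (H × H)).symm (x1, x2), (WithLp.equiv 2 (H × H)).symm (y1, y2)⟫_ℂ
        = ⟪x1, y1⟫_ℂ + ⟪x2, y2⟫_ℂ := by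
    intro x1 x2 y1 y2
    simp [WithLp.prod_inner_apply]
  -- boundedness of the one-operator families
  have hbdd : ∀ C : H →L[ℂ] H, BddAbove (Set.range fun p : Ω × Ω =>
      t * ‖⟪C (k p.1), k p.2⟫_ℂ‖ + (1 - t) * ‖⟪adjoint C (k p.1), k p.2⟫_ℂ‖) := by
    intro C
    refine ⟨‖C‖, ?_⟩
    rintro x ⟨p, rfl⟩
    have h1 : ‖⟪C (k p.1), k p.2⟫_ℂ‖ ≤ ‖C‖ := by
      calc ‖⟪C (k p.1), k p.2⟫_ℂ‖ ≤ ‖C (k p.1)‖ * ‖k p.2‖ := norm_inner_le_norm _ _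
        _ ≤ (‖C‖ * ‖k p.1‖) * ‖k p.2‖ := by
            gcongr; exact C.le_opNorm _
        _ = ‖C‖ := by rw [hk, hk]; ring
    have h2 : ‖⟪adjoint C (k p.1), k p.2⟫_ℂ‖ ≤ ‖C‖ := by
      calc ‖⟪adjoint C (k p.1), k p.2⟫_ℂ‖ ≤ ‖adjoint C (k p.1)‖ * ‖k p.2‖ :=
            norm_inner_le_norm _ _
        _ ≤ (‖adjoint C‖ * ‖k p.1‖) * ‖k p.2‖ := by gcongr; exact (adjoint C).le_opNorm _
        _ = ‖C‖ := by rw [hk, hk, LinearIsometryEquiv.norm_map (adjoint : (H →L[ℂ] H) ≃ₗᵢ⋆[ℂ] (H →L[ℂ] H)) C]; ring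
    dsimp only
    nlinarith
  have hle : ∀ (C : H →L[ℂ] H) (l m : Ω),
      t * ‖⟪C (k l), k m⟫_ℂ‖ + (1 - t) * ‖⟪adjoint C (k l), k m⟫_ℂ‖ ≤ tber k t C := by
    intro C l m
    exact le_ciSup (hbdd C) (l, m)
  have hnonneg : ∀ C : H →L[ℂ] H, 0 ≤ tber k t C := by
    intro C
    refine le_trans ?_ (hle C l0 l0)
    have := norm_nonneg (⟪C (k l0), k l0⟫_ℂ)
    have := norm_nonneg (⟪adjoint C (k l0), k l0⟫_ℂ)
    nlinarith
  have hmax : 0 ≤ max (tber k t A) (tber k t B) :=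
    le_trans (hnonneg A) (le_max_left _ _)
  -- main bound
  have : Nonempty {q : (Ω × Ω) × ℂ × ℂ // ‖q.2.1‖ ^ 2 + ‖q.2.2‖ ^ 2 = 1} :=
    ⟨⟨((l0, l0), (1, 0)), by simp⟩⟩
  refine ciSup_le ?_
  rintro ⟨⟨⟨⟨l1, l2⟩, c1, c2⟩, hc⟩, ⟨⟨⟨m1, m2⟩, d1, d2⟩, hd⟩⟩
  simp only [K2]
  set α := (⟪A (k l1), k m1⟫_ℂ) with hα
  set β := (⟪B (k l2), k m2⟫_ℂ) with hβ
  set α' := (⟪adjoint A (k l1), k m1⟫_ℂ) with hα'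
  set β' := (⟪adjoint B (k l2), k m2⟫_ℂ) with hβ'
  have e1 : ⟪T ((WithLp.equiv 2 (H × H)).symm (c1 • k l1, c2 • k l2)),
      (WithLp.equiv 2 (H × H)).symm (d1 • k m1, d2 • k m2)⟫_ℂ
      = (starRingEnd ℂ c1 * d1) * α + (starRingEnd ℂ c2 * d2) * β := by
    rw [hT, hinner]
    simp only [map_smul, inner_smul_left, inner_smul_right, hα, hβ]
    ring
  have e2 : ⟪adjoint T ((WithLp.equiv 2 (H × H)).symm (c1 • k l1, c2 • k l2)),
      (WithLp.equiv 2 (H × H)).symm (d1 • k m1, d2 • k m2)⟫_ℂ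
      = (starRingEnd ℂ c1 * d1) * α' + (starRingEnd ℂ c2 * d2) * β' := by
    rw [ContinuousLinearMap.adjoint_inner_left, hT, hinner]
    simp only [map_smul, inner_smul_left, inner_smul_right, hα', hβ',
      ← ContinuousLinearMap.adjoint_inner_left]
    ring
  rw [e1, e2]
  set a1 := ‖c1‖ * ‖d1‖ with ha1
  set a2 := ‖c2‖ * ‖d2‖ with ha2
  have hsum : a1 + a2 ≤ 1 := by
    simp only [ha1, ha2]
    nlinarith [norm_nonneg c1, norm_nonneg c2, norm_nonneg d1, norm_nonneg d2,
      sq_nonneg (‖c1‖ - ‖d1‖), sq_nonneg (‖c2‖ - ‖d2‖)]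
  have nb1 : ‖(starRingEnd ℂ c1 * d1) * α + (starRingEnd ℂ c2 * d2) * β‖
      ≤ a1 * ‖α‖ + a2 * ‖β‖ := by
    calc _ ≤ ‖(starRingEnd ℂ c1 * d1) * α‖ + ‖(starRingEnd ℂ c2 * d2) * β‖ := norm_add_le _ _
      _ = a1 * ‖α‖ + a2 * ‖β‖ := by
          simp only [norm_mul, RCLike.norm_conj, ha1, ha2]
  have nb2 : ‖(starRingEnd ℂ c1 * d1) * α' + (starRingEnd ℂ c2 * d2) * β'‖
      ≤ a1 * ‖α'‖ + a2 * ‖β'‖ := by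
    calc _ ≤ ‖(starRingEnd ℂ c1 * d1) * α'‖ + ‖(starRingEnd ℂ c2 * d2) * β'‖ := norm_add_le _ _
      _ = a1 * ‖α'‖ + a2 * ‖β'‖ := by
          simp only [norm_mul, RCLike.norm_conj, ha1, ha2]
  have hA' : t * ‖α‖ + (1 - t) * ‖α'‖ ≤ max (tber k t A) (tber k t B) :=
    le_trans (hle A l1 m1) (le_max_left _ _)
  have hB' : t * ‖β‖ + (1 - t) * ‖β'‖ ≤ max (tber k t A) (tber k t B) :=
    le_trans (hle B l2 m2) (le_max_right _ _)
  have ha1n : 0 ≤ a1 := by positivity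
  have ha2n : 0 ≤ a2 := by positivity
  calc t * ‖(starRingEnd ℂ c1 * d1) * α + (starRingEnd ℂ c2 * d2) * β‖
        + (1 - t) * ‖(starRingEnd ℂ c1 * d1) * α' + (starRingEnd ℂ c2 * d2) * β'‖
      ≤ t * (a1 * ‖α‖ + a2 * ‖β‖) + (1 - t) * (a1 * ‖α'‖ + a2 * ‖β'‖) := by
        have := nb1; have := nb2; nlinarith
    _ = a1 * (t * ‖α‖ + (1 - t) * ‖α'‖) + a2 * (t * ‖β‖ + (1 - t) * ‖β'‖) := by ring
    _ ≤ a1 * max (tber k t A) (tber k t B) + a2 * max (tber k t A) (tber k t B) := by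
        gcongr
    _ = (a1 + a2) * max (tber k t A) (tber k t B) := by ring
    _ ≤ 1 * max (tber k t A) (tber k t B) := by gcongr
    _ = _ := one_mul _
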